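/- arXiv:1607.02279 — 4 statements merged into one kernel-verified Lean document; each statement's English description precedes it below -/
import Mathlib

section
/- If two q-ary words x and x' of length n are root-conjugates (i.e., the root of x equals a rotation of the root of x') and their common minimum period r = π(x) divides n−ℓ+1, then x and x' have identical ℓ-gram profile vectors, i.e., every word z of length ℓ occurs equally often as an ℓ-gram in x and in x'. -/
attribute [local instance] Classical.propDecidable

/-- `r` is a period of the word `x : Fin n → Fin q`. -/
def IsPeriod {q n : ℕ} (x : Fin n → Fin q) (r : ℕ) : Prop :=
  0 < r ∧ ∀ i : ℕ, ∀ h : i + r < n, x ⟨i, by omega⟩ = x ⟨i + r, h⟩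

/-- The minimum period `π(x)` of a word. -/
noncomputable def minPeriod {q n : ℕ} (x : Fin n → Fin q) : ℕ :=
  sInf {r | IsPeriod x r}

/-- The ℓ-gram profile vector of `x`: for each `z` of length ℓ, the number of
occurrences of `z` as a contiguous substring of `x`. -/
noncomputable def profileVec (q n ℓ : ℕ) (x : Fin n → Fin q) : (Fin ℓ → Fin q) → ℕ :=
  fun z => ((Finset.range (n + 1 - ℓ)).filter
    (fun i => ∀ k : Fin ℓ, ∀ h : i + k.val < n, x ⟨i + k.val, h⟩ = z k)).card

/-!
The ℓ-grams of a word of length `n` start at the `N = n + 1 - ℓ` positions `0, …, N - 1`.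
If `x` and `x'` have period `r` and `x i = x' ((i + s) % r)` for `i < r`, then the ℓ-gram of `x` at `i`
is the ℓ-gram of `x'` at any position congruent to `i + s` modulo `r`. When `r ∣ N`, the
position `(i + s) % N` is such a position, and `i ↦ (i + s) % N` permutes `0, …, N - 1`, so
every word occurs equally often in `x` and in `x'`.
-/

open Finset

namespace Nat

theorem add_mod_add_mod_of_dvd {N s t : ℕ} (h : N ∣ s + t) (i : ℕ) :
    ((i + s) % N + t) % N = i % N := by
  obtain ⟨c, hc⟩ := h
  rw [Nat.mod_add_mod, add_assoc, hc, Nat.add_mul_mod_self_left]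

end Nat

theorem card_filter_range_eq_of_rotate {N : ℕ} (s : ℕ) {P Q : ℕ → Prop}
    [DecidablePred P] [DecidablePred Q] (h : ∀ i < N, P i ↔ Q ((i + s) % N)) :
    #((range N).filter P) = #((range N).filter Q) := by
  have hdvd : 0 < N → N ∣ s + (N - s % N) ∧ N ∣ (N - s % N) + s := fun hN => by
    have : s + (N - s % N) = N * (s / N + 1) := by
      have := Nat.div_add_mod s N
      have := Nat.mod_lt s hN
      rw [Nat.mul_succ]
      omega
    exact ⟨⟨_, this⟩, ⟨_, by rw [add_comm, this]⟩⟩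
  refine card_nbij' (fun i => (i + s) % N) (fun j => (j + (N - s % N)) % N) ?_ ?_ ?_ ?_
  · intro i hi
    simp only [mem_coe, mem_filter, mem_range] at hi ⊢
    exact ⟨Nat.mod_lt _ (by omega), (h i hi.1).1 hi.2⟩
  · intro j hj
    simp only [mem_coe, mem_filter, mem_range] at hj ⊢
    have hN : 0 < N := by omega
    refine ⟨Nat.mod_lt _ hN, (h _ (Nat.mod_lt _ hN)).2 ?_⟩
    rw [Nat.add_mod_add_mod_of_dvd (hdvd hN).2, Nat.mod_eq_of_lt hj.1]
    exact hj.2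
  · intro i hi
    simp only [mem_coe, mem_filter, mem_range] at hi
    dsimp only
    rw [Nat.add_mod_add_mod_of_dvd (hdvd (by omega)).1, Nat.mod_eq_of_lt hi.1]
  · intro j hj
    simp only [mem_coe, mem_filter, mem_range] at hj
    dsimp only
    rw [Nat.add_mod_add_mod_of_dvd (hdvd (by omega)).2, Nat.mod_eq_of_lt hj.1]

section Periods

variable {q n : ℕ}

theorem isPeriod_minPeriod (x : Fin n → Fin q) : IsPeriod x (minPeriod x) :=
  Nat.sInf_mem (s := {r | IsPeriod x r}) ⟨n + 1, Nat.succ_pos n, fun i h => by omega⟩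

namespace IsPeriod

variable {x : Fin n → Fin q} {r : ℕ}

theorem apply_add_mul (hr : IsPeriod x r) (i : ℕ) :
    ∀ (m : ℕ) (h : i + r * m < n), x ⟨i + r * m, h⟩ = x ⟨i, by omega⟩
  | 0, _ => rfl
  | m + 1, h => by
    have e : i + r * (m + 1) = i + r * m + r := by ring
    calc x ⟨i + r * (m + 1), h⟩ = x ⟨i + r * m + r, e ▸ h⟩ := by simp only [e]
      _ = x ⟨i + r * m, by omega⟩ := (hr.2 _ _).symm
      _ = x ⟨i, by omega⟩ := hr.apply_add_mul i m _

theorem apply_mod (hr : IsPeriod x r) (i : ℕ) (h : i < n) :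
    x ⟨i, h⟩ = x ⟨i % r, (Nat.mod_le i r).trans_lt h⟩ := by
  have h' : i % r + r * (i / r) < n := by rwa [Nat.mod_add_div]
  rw [← hr.apply_add_mul (i % r) (i / r) h']
  simp only [Nat.mod_add_div]

theorem apply_eq_of_modEq (hr : IsPeriod x r) {i j : ℕ} (hi : i < n) (hj : j < n)
    (hij : i ≡ j [MOD r]) : x ⟨i, hi⟩ = x ⟨j, hj⟩ := by
  rw [hr.apply_mod i hi, hr.apply_mod j hj]
  congr 1
  exact Fin.ext hij

end IsPeriod

variable {x x' : Fin n → Fin q} {r s : ℕ}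

theorem apply_eq_of_add_modEq (hx : IsPeriod x r) (hx' : IsPeriod x' r)
    (hs : ∀ i : ℕ, i < r → ∀ (h1 : i < n) (h2 : (i + s) % r < n),
      x ⟨i, h1⟩ = x' ⟨(i + s) % r, h2⟩)
    {j j' : ℕ} (hj : j < n) (hj' : j' < n) (hjj' : j + s ≡ j' [MOD r]) :
    x ⟨j, hj⟩ = x' ⟨j', hj'⟩ := by
  have e : (j % r + s) % r = j' % r := (Nat.mod_add_mod j r s).trans hjj'
  calc x ⟨j, hj⟩ = x ⟨j % r, _⟩ := hx.apply_mod j hj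
    _ = x' ⟨(j % r + s) % r, by rw [e]; exact (Nat.mod_le j' r).trans_lt hj'⟩ :=
      hs _ (Nat.mod_lt j hx.1) _ _
    _ = x' ⟨j', hj'⟩ := hx'.apply_eq_of_modEq _ _ (by rw [Nat.ModEq, Nat.mod_mod, e])

/-- `profileVec q n ℓ x z` is, by definition, the number of `i < n + 1 - ℓ` with
`OccursAt x z i`. -/
def OccursAt {ℓ : ℕ} (x : Fin n → Fin q) (z : Fin ℓ → Fin q) (i : ℕ) : Prop :=
  ∀ k : Fin ℓ, ∀ h : i + k.val < n, x ⟨i + k.val, h⟩ = z k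

theorem occursAt_iff_occursAt_add_mod {ℓ : ℕ} (hx : IsPeriod x r) (hx' : IsPeriod x' r)
    (hs : ∀ i : ℕ, i < r → ∀ (h1 : i < n) (h2 : (i + s) % r < n),
      x ⟨i, h1⟩ = x' ⟨(i + s) % r, h2⟩)
    (hrN : r ∣ n + 1 - ℓ) {i : ℕ} (hi : i < n + 1 - ℓ) (z : Fin ℓ → Fin q) :
    OccursAt x z i ↔ OccursAt x' z ((i + s) % (n + 1 - ℓ)) := by
  have hi' : (i + s) % (n + 1 - ℓ) < n + 1 - ℓ := Nat.mod_lt _ (by omega)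
  have hletter (k : Fin ℓ) (h : i + k < n) (h' : (i + s) % (n + 1 - ℓ) + k < n) :
      x ⟨i + k, h⟩ = x' ⟨(i + s) % (n + 1 - ℓ) + k, h'⟩ := by
    refine apply_eq_of_add_modEq hx hx' hs h h' ?_
    rw [add_right_comm]
    exact (((Nat.mod_modEq _ _).of_dvd hrN).add_right k).symm
  constructor
  · intro hocc k h
    rw [← hletter k (by omega) h]
    exact hocc k _
  · intro hocc k h
    rw [hletter k h (by omega)]
    exact hocc k _

end Periods

/-- If `x` and `x'` are root-conjugates (the root of `x` is a rotation of the root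
of `x'`) and their common minimum period divides `n - ℓ + 1`, then they have
identical ℓ-gram profile vectors. -/
theorem stmt_1 (q n ℓ : ℕ) (hℓn : ℓ ≤ n) (x x' : Fin n → Fin q)
    (hper : minPeriod x = minPeriod x')
    (hconj : ∃ s : ℕ, ∀ i : ℕ, i < minPeriod x →
      ∀ (h1 : i < n) (h2 : (i + s) % minPeriod x < n),
        x ⟨i, h1⟩ = x' ⟨(i + s) % minPeriod x, h2⟩)
    (hdvd : minPeriod x ∣ (n - ℓ + 1)) :
    profileVec q n ℓ x = profileVec q n ℓ x' := by
  obtain ⟨s, hs⟩ := hconj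
  have hx' : IsPeriod x' (minPeriod x) := hper ▸ isPeriod_minPeriod x'
  have hrN : minPeriod x ∣ n + 1 - ℓ := by rwa [Nat.sub_add_comm hℓn]
  funext z
  exact card_filter_range_eq_of_rotate s fun i hi =>
    occursAt_iff_occursAt_add_mod (isPeriod_minPeriod x) hx' hs hrN hi z
end

section
/- In the special case ℓ = n−1 (with n ≥ 2 and q ≥ 2), the number of distinct (n−1)-gram profile vectors of q-ary words of length n equals q^n − C(q,2). -/
attribute [local instance] Classical.propDecidable

/-- `P_q(n,ℓ)`: the number of distinct ℓ-gram profile vectors of words in `[q]^n`. -/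
noncomputable def numProfiles (q n ℓ : ℕ) : ℕ :=
  (Finset.univ.image (profileVec q n ℓ)).card

/-! For `ℓ = n - 1` a word has exactly two windows, its prefix and its suffix, so its profile
records just the unordered pair {prefix, suffix}. If two distinct words give the same pair, the
prefix of each is the suffix of the other, which forces `x = abab…` and `y = baba…`. Hence the
profile map is injective except that it glues together `abab…` and `baba…` for each of the
`C(q, 2)` pairs `a ≠ b`. -/

open Finset

lemma Finset.card_image_eq_card_sub_card_of_injOn_sdiff {α β : Type*} [DecidableEq α]
    [DecidableEq β] {f : α → β} {s t : Finset α} (hts : t ⊆ s)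
    (hinj : Set.InjOn f ↑(s \ t)) (hcover : ∀ x ∈ t, ∃ y ∈ s \ t, f y = f x) :
    #(s.image f) = #s - #t := by
  have himage : s.image f = (s \ t).image f := by
    refine (image_subset_image sdiff_subset).antisymm' fun b hb => ?_
    obtain ⟨x, hx, rfl⟩ := mem_image.mp hb
    by_cases hxt : x ∈ t
    · obtain ⟨y, hy, hyx⟩ := hcover x hxt
      exact mem_image.mpr ⟨y, hy, hyx⟩
    · exact mem_image_of_mem f (mem_sdiff.mpr ⟨hx, hxt⟩)
  rw [himage, card_image_of_injOn hinj, card_sdiff_of_subset hts]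

lemma Multiset.pair_eq_pair_iff {α : Type*} {a b c d : α} :
    ({a, b} : Multiset α) = {c, d} ↔ a = c ∧ b = d ∨ a = d ∧ b = c := by
  rw [show ({a, b} : Multiset α) = ([a, b] : List α) from rfl,
    show ({c, d} : Multiset α) = ([c, d] : List α) from rfl, Multiset.coe_eq_coe,
    List.perm_pair]
  simp only [List.cons.injEq, and_true]

section Words

variable {α : Type*} {m : ℕ}

def alternating (n : ℕ) (a b : α) : Fin n → α := fun i => if Even (i : ℕ) then a else b

lemma alternating_injective (m : ℕ) :
    Function.Injective (fun p : α × α => alternating (m + 2) p.1 p.2) := by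
  rintro ⟨a, b⟩ ⟨c, d⟩ h
  have h0 := congrFun h 0
  have h1 := congrFun h 1
  simp [alternating] at h0 h1
  simp [h0, h1]

lemma init_alternating (a b : α) :
    Fin.init (alternating (m + 2) a b) = Fin.tail (alternating (m + 2) b a) := by
  funext i
  simp only [alternating, Fin.init, Fin.tail, Fin.val_castSucc, Fin.val_succ, Nat.even_add_one,
    ite_not]

lemma tail_alternating (a b : α) :
    Fin.tail (alternating (m + 2) a b) = Fin.init (alternating (m + 2) b a) :=
  (init_alternating b a).symm

lemma eq_of_init_eq_of_tail_eq {x y : Fin (m + 2) → α} (hinit : Fin.init x = Fin.init y)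
    (htail : Fin.tail x = Fin.tail y) : x = y := by
  rw [← Fin.cons_self_tail x, ← Fin.cons_self_tail y, htail]
  congr 1
  exact congrFun hinit 0

lemma eq_alternating_of_init_eq_tail {x y : Fin (m + 2) → α} (h₁ : Fin.init x = Fin.tail y)
    (h₂ : Fin.tail x = Fin.init y) : x = alternating (m + 2) (x 0) (x 1) := by
  suffices ∀ k (hk : k < m + 2), x ⟨k, hk⟩ = alternating (m + 2) (x 0) (x 1) ⟨k, hk⟩ from
    funext fun i => this i i.isLt
  intro k
  induction k using Nat.twoStepInduction with
  | zero => intro; simp [alternating]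
  | one => intro; simp [alternating]
  | more k ih _ =>
    intro hk
    have hx : x ⟨k + 2, hk⟩ = x ⟨k, by omega⟩ :=
      (congrFun h₂ ⟨k + 1, by omega⟩).trans (congrFun h₁ ⟨k, by omega⟩).symm
    rw [hx, ih]
    simp [alternating, Nat.even_add_one]

end Words

section Profiles

variable {q m : ℕ}

lemma profileVec_eq_count_pair (x : Fin (m + 2) → Fin q) :
    profileVec q (m + 2) (m + 1) x = fun z => Multiset.count z {Fin.init x, Fin.tail x} := by
  funext z
  have hinit : (∀ k : Fin (m + 1), ∀ h : k.val < m + 2, x ⟨k.val, h⟩ = z k) ↔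
      z = Fin.init x := by
    simp only [funext_iff, Fin.init, eq_comm (a := z _)]
    exact forall_congr' fun k => ⟨fun h => h (by omega), fun h _ => h⟩
  have htail : (∀ k : Fin (m + 1), ∀ h : 1 + k.val < m + 2, x ⟨1 + k.val, h⟩ = z k) ↔
      z = Fin.tail x := by
    simp only [add_comm 1, funext_iff, Fin.tail, eq_comm (a := z _)]
    exact forall_congr' fun k => ⟨fun h => h (by omega), fun h _ => h⟩
  rw [profileVec, show m + 2 + 1 - (m + 1) = 2 by omega, card_filter, sum_range_succ,
    sum_range_succ, sum_range_zero]
  simp only [zero_add]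
  simp only [hinit, htail, Multiset.insert_eq_cons, Multiset.count_cons,
    Multiset.count_singleton]
  exact add_comm _ _

theorem profileVec_eq_profileVec_iff {x y : Fin (m + 2) → Fin q} :
    profileVec q (m + 2) (m + 1) x = profileVec q (m + 2) (m + 1) y ↔
      x = y ∨ ∃ a b, x = alternating (m + 2) a b ∧ y = alternating (m + 2) b a := by
  rw [profileVec_eq_count_pair, profileVec_eq_count_pair, funext_iff, ← Multiset.ext,
    Multiset.pair_eq_pair_iff]
  constructor
  · rintro (⟨hinit, htail⟩ | ⟨h₁, h₂⟩)
    · exact .inl (eq_of_init_eq_of_tail_eq hinit htail)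
    · refine .inr ⟨x 0, x 1, eq_alternating_of_init_eq_tail h₁ h₂, ?_⟩
      rw [eq_alternating_of_init_eq_tail h₂.symm h₁.symm]
      congr 1
      · exact (congrFun h₂ 0).symm
      · exact (congrFun h₁ 0).symm
  · rintro (rfl | ⟨a, b, rfl, rfl⟩)
    · exact .inl ⟨rfl, rfl⟩
    · exact .inr ⟨init_alternating a b, tail_alternating a b⟩

end Profiles

section Counting

variable {q m : ℕ}

/-- One word out of each pair `abab…`, `baba…` (`a ≠ b`) of words sharing their profile. -/
def ascendingAlternating (q m : ℕ) : Finset (Fin (m + 2) → Fin q) :=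
  ({p | p.1 < p.2} : Finset (Fin q × Fin q)).image fun p => alternating (m + 2) p.1 p.2

lemma card_ascendingAlternating : #(ascendingAlternating q m) = q.choose 2 := by
  rw [ascendingAlternating, card_image_of_injective _ (alternating_injective m),
    Fintype.card_product_filter_lt, Fintype.card_fin]

lemma alternating_mem_ascendingAlternating {a b : Fin q} :
    alternating (m + 2) a b ∈ ascendingAlternating q m ↔ a < b := by
  simpa [ascendingAlternating] using
    (alternating_injective m).mem_finset_image (a := (a, b)) (s := {p | p.1 < p.2})

lemma profileVec_injOn_compl_ascendingAlternating :
    Set.InjOn (profileVec q (m + 2) (m + 1)) ↑(univ \ ascendingAlternating q m) := by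
  intro x hx y hy hxy
  simp only [coe_sdiff, coe_univ, Set.mem_sdiff, Set.mem_univ, true_and, mem_coe] at hx hy
  obtain rfl | ⟨a, b, rfl, rfl⟩ := profileVec_eq_profileVec_iff.mp hxy
  · rfl
  rcases lt_trichotomy a b with hab | rfl | hba
  · exact absurd (alternating_mem_ascendingAlternating.mpr hab) hx
  · rfl
  · exact absurd (alternating_mem_ascendingAlternating.mpr hba) hy

lemma exists_profileVec_eq_of_mem_ascendingAlternating {x : Fin (m + 2) → Fin q}
    (hx : x ∈ ascendingAlternating q m) :
    ∃ y ∈ univ \ ascendingAlternating q m,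
      profileVec q (m + 2) (m + 1) y = profileVec q (m + 2) (m + 1) x := by
  obtain ⟨⟨a, b⟩, hab, rfl⟩ := mem_image.mp hx
  refine ⟨alternating (m + 2) b a, ?_, profileVec_eq_profileVec_iff.mpr (.inr ⟨b, a, rfl, rfl⟩)⟩
  simpa [alternating_mem_ascendingAlternating] using (mem_filter.mp hab).2.le

end Counting

theorem stmt_5_general (q n : ℕ) (hn : 2 ≤ n) :
    numProfiles q n (n - 1) = q ^ n - q.choose 2 := by
  obtain ⟨m, rfl⟩ := Nat.exists_eq_add_of_le' hn
  rw [numProfiles, show m + 2 - 1 = m + 1 by omega,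
    card_image_eq_card_sub_card_of_injOn_sdiff (subset_univ _)
      profileVec_injOn_compl_ascendingAlternating
      fun _ => exists_profileVec_eq_of_mem_ascendingAlternating,
    card_ascendingAlternating, card_univ, Fintype.card_fun, Fintype.card_fin, Fintype.card_fin]

/-- For `ℓ = n−1` with `n ≥ 2` and `q ≥ 2`, `P_q(n,n−1) = q^n − C(q,2)`. -/
theorem stmt_5 (q n : ℕ) (hq : 2 ≤ q) (hn : 2 ≤ n) :
    numProfiles q n (n - 1) = q ^ n - q.choose 2 :=
  stmt_5_general q n hn
end

section
/- Let ℓ ≤ n < 2ℓ and let x be a q-ary word of length n with x[ℓ−1] ≠ x[n]. Then x is the unique word with its ℓ-gram profile vector: any word x' of length n with p(x',ℓ) = p(x,ℓ) equals x. -/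
/-!
Restricting the `ℓ`-windows of a word to their first (resp. last) `ℓ - 1` letters shows that the
profile determines the multiset of `(ℓ - 1)`-windows at positions `0, …, m - 1` (resp.
`1, …, m`), where `m = n + 1 - ℓ`. Comparing the two, the first and last `(ℓ - 1)`-windows
`W₀, Wₘ` of `x` and `W₀', Wₘ'` of `x'` satisfy `{W₀', Wₘ} = {W₀, Wₘ'}`; the hypothesis says
`W₀ ≠ Wₘ`, so `W₀' = W₀` and `Wₘ' = Wₘ`. Since `n < 2ℓ` these cover every position except,
when `n = 2ℓ - 1`, the position `ℓ - 1`, which is then recovered from the multiset of first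
letters of the `ℓ`-windows.
-/

attribute [local instance] Classical.propDecidable

namespace Multiset

theorem map_range_succ_eq_cons_map_succ {β : Type*} (V : ℕ → β) (m : ℕ) :
    (range (m + 1)).map V = V 0 ::ₘ (range m).map (V ∘ Nat.succ) := by
  simp [range, List.range_succ_eq_map]

theorem endpoints_eq_of_map_range_eq {β : Type*} {W W' : ℕ → β} {m : ℕ}
    (h : (range m).map W' = (range m).map W)
    (hsucc : (range m).map (W' ∘ Nat.succ) = (range m).map (W ∘ Nat.succ))
    (hne : W 0 ≠ W m) : W' 0 = W 0 ∧ W' m = W m := by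
  have hcons (V : ℕ → β) : V 0 ::ₘ (range m).map (V ∘ Nat.succ) = V m ::ₘ (range m).map V := by
    rw [← map_range_succ_eq_cons_map_succ, range_succ, map_cons]
  have hpair : W' 0 ::ₘ W m ::ₘ (range m).map W = W 0 ::ₘ W' m ::ₘ (range m).map W := by
    rw [← hcons, ← h, ← hcons, hsucc, cons_swap]
  rw [← singleton_add, ← singleton_add (W m), ← singleton_add (W 0), ← singleton_add (W' m),
    ← add_assoc, ← add_assoc, add_left_inj, singleton_add, singleton_add, cons_eq_cons] at hpair
  rcases hpair with ⟨h0, hm⟩ | ⟨-, cs, hm, -⟩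
  · exact ⟨h0, (singleton_inj.1 hm).symm⟩
  · exact absurd ((singleton_eq_cons_iff cs).1 hm).1.symm hne

theorem apply_eq_of_map_range_succ_eq {β : Type*} {f g : ℕ → β} {m : ℕ}
    (h : (range (m + 1)).map f = (range (m + 1)).map g) (hlt : ∀ i < m, f i = g i) :
    f m = g m := by
  rwa [range_succ, map_cons, map_cons, map_congr rfl (fun i hi => hlt i (mem_range.1 hi)),
    cons_inj_left] at h

end Multiset

section Windows

-- Words are read as functions `ℕ → α` (extending `Fin n → α` arbitrarily) so that windows need
-- no bound proofs.

variable {α : Type*}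

def window (w : ℕ → α) (k i : ℕ) : Fin k → α := fun j => w (i + j)

def windows (w : ℕ → α) (k m : ℕ) : Multiset (Fin k → α) :=
  (Multiset.range m).map (window w k)

theorem init_window (w : ℕ → α) (k i : ℕ) : Fin.init (window w (k + 1) i) = window w k i := rfl

theorem tail_window (w : ℕ → α) (k i : ℕ) :
    Fin.tail (window w (k + 1) i) = window w k (i + 1) := by
  funext j
  simp only [Fin.tail, window, Fin.val_succ, add_assoc, add_comm 1]

theorem map_init_windows (w : ℕ → α) (k m : ℕ) :
    (windows w (k + 1) m).map Fin.init = windows w k m := by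
  simp only [windows, Multiset.map_map, Function.comp_def, init_window]

theorem map_tail_windows (w : ℕ → α) (k m : ℕ) :
    (windows w (k + 1) m).map Fin.tail = (Multiset.range m).map (window w k ∘ Nat.succ) := by
  simp only [windows, Multiset.map_map, Function.comp_def, tail_window]

theorem map_apply_zero_windows (w : ℕ → α) (k m : ℕ) :
    (windows w (k + 1) m).map (· 0) = (Multiset.range m).map w := by
  simp only [windows, Multiset.map_map, Function.comp_def, window, Fin.val_zero, add_zero]

end Windows

theorem exists_nat_extension {α : Type*} {n : ℕ} (x : Fin n → α) (hn : 0 < n) :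
    ∃ w : ℕ → α, ∀ i (h : i < n), w i = x ⟨i, h⟩ :=
  ⟨fun i => x ⟨i % n, Nat.mod_lt i hn⟩, fun i h => by simp only [Nat.mod_eq_of_lt h]⟩

theorem profileVec_eq_count_windows {q n ℓ : ℕ} {x : Fin n → Fin q} {w : ℕ → Fin q}
    (hw : ∀ i (h : i < n), w i = x ⟨i, h⟩) (z : Fin ℓ → Fin q) :
    profileVec q n ℓ x z = (windows w ℓ (n + 1 - ℓ)).count z := by
  rw [profileVec, windows, Multiset.count_map, Finset.card_def, Finset.filter_val,
    Finset.range_val]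
  congr 1
  refine Multiset.filter_congr fun i hi => ?_
  have hin : ∀ j : Fin ℓ, i + j < n := fun j => by
    have := Multiset.mem_range.1 hi; omega
  simp only [funext_iff, window, hw _ (hin _), hin, forall_true_left]
  exact ⟨fun h j => (h j).symm, fun h j => (h j).symm⟩

theorem windows_eq_of_profileVec_eq {q n ℓ : ℕ} {x x' : Fin n → Fin q} {w w' : ℕ → Fin q}
    (hw : ∀ i (h : i < n), w i = x ⟨i, h⟩) (hw' : ∀ i (h : i < n), w' i = x' ⟨i, h⟩)
    (hp : profileVec q n ℓ x' = profileVec q n ℓ x) :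
    windows w' ℓ (n + 1 - ℓ) = windows w ℓ (n + 1 - ℓ) :=
  Multiset.ext.2 fun z => by
    rw [← profileVec_eq_count_windows hw', ← profileVec_eq_count_windows hw, hp]

-- The paper's 1-indexed positions `ℓ - 1` and `n` are `ℓ - 2` and `n - 1` here.
/-- For `ℓ ≤ n < 2ℓ`, a word `x` whose (1-indexed) symbol at position `ℓ−1`
differs from its last symbol is uniquely determined by its ℓ-gram profile
vector. (0-indexed positions `ℓ−2` and `n−1`.) -/
theorem stmt_6 (q n ℓ : ℕ) (hℓ2 : 2 ≤ ℓ) (hℓn : ℓ ≤ n) (hn2 : n < 2 * ℓ)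
    (x : Fin n → Fin q)
    (hx : x ⟨ℓ - 2, by omega⟩ ≠ x ⟨n - 1, by omega⟩) :
    ∀ x' : Fin n → Fin q, profileVec q n ℓ x' = profileVec q n ℓ x → x' = x := by
  intro x' hp
  obtain ⟨k, rfl⟩ : ∃ k, ℓ = k + 1 := ⟨ℓ - 1, by omega⟩
  obtain ⟨w, hw⟩ := exists_nat_extension x (by omega)
  obtain ⟨w', hw'⟩ := exists_nat_extension x' (by omega)
  have hwin : windows w' (k + 1) (n - k) = windows w (k + 1) (n - k) := by
    simpa using windows_eq_of_profileVec_eq hw hw' hp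
  have hne : window w k 0 ≠ window w k (n - k) := fun h => hx <| by
    have := congrFun h ⟨k - 1, by omega⟩
    simp only [window] at this
    rw [hw _ (by omega), hw _ (by omega)] at this
    convert this using 3 <;> omega
  have hinit := congrArg (Multiset.map Fin.init) hwin
  have htail := congrArg (Multiset.map Fin.tail) hwin
  rw [map_init_windows, map_init_windows] at hinit
  rw [map_tail_windows, map_tail_windows] at htail
  obtain ⟨hpre, hsuf⟩ := Multiset.endpoints_eq_of_map_range_eq hinit htail hne
  have hlt : ∀ j < k, w' j = w j := fun j hj => by
    simpa [window] using congrFun hpre ⟨j, hj⟩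
  have hge : ∀ j, n - k ≤ j → j < n → w' j = w j := fun j hj hjn => by
    simpa [window, Nat.add_sub_cancel' hj] using congrFun hsuf ⟨j - (n - k), by omega⟩
  have hall : ∀ j < n, w' j = w j := by
    intro j hjn
    rcases lt_or_ge j k with hjk | hjk
    · exact hlt j hjk
    rcases le_or_gt (n - k) j with hjm | hjm
    · exact hge j hjm hjn
    have hm : n - k = k + 1 := by omega
    obtain rfl : j = k := by omega
    have hfirst := congrArg (Multiset.map (· 0)) hwin
    rw [map_apply_zero_windows, map_apply_zero_windows, hm] at hfirst
    exact Multiset.apply_eq_of_map_range_succ_eq hfirst hlt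
  funext j
  rw [← hw, ← hw']
  exact hall j j.isLt
end

section
/- Every word produced by encode₂ is (A*,ℓ)-addressable: within each block z_i of length ℓ, the only occurrence of an element of A* as an a-gram starting at positions 2 through ℓ−a+1 is excluded, because every window of a consecutive symbols starting at position j ≥ 2 has symbol sum nonzero mod q. -/
/-!
Each appended symbol avoids the unique residue that would make the newest window (the
previous `a - 1` symbols followed by it) sum to `0` mod `q`, and appending never changes
earlier windows, so by induction no window of a block starting after position 1 lies in
`A*`. Since all blocks have length `ℓ`, the `i`-th block of the concatenation starts at `iℓ`.
-/

/-- The block construction of Algorithm 2 (see `encode2`). -/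
def blockList (q a : ℕ) (hq : 0 < q) (u : List (Fin q)) (c : ℕ → ℕ) : ℕ → List (Fin q)
  | 0 => u
  | m + 1 =>
    let z := blockList q a hq u c m
    let zbad : ℕ := (q - (((z.reverse.take (a - 1)).map Fin.val).sum % q)) % q
    let t := c m
    z ++ [⟨(if t ≤ zbad then t - 1 else t) % q, Nat.mod_lt _ hq⟩]

/-- Algorithm 2, `encode₂`: concatenate the `M` blocks. -/
def encode2 (q a ℓ M : ℕ) (hq : 0 < q) (u : Fin M → List (Fin q))
    (c : Fin M → ℕ → ℕ) : List (Fin q) :=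
  (List.ofFn (fun i : Fin M => blockList q a hq (u i) (c i) (ℓ - a))).flatten

/-- The residue `x < q` with `s + x ≡ 0 [MOD q]`: the symbol `z_bad` of `encode₂`. -/
def negMod (q s : ℕ) : ℕ := (q - s % q) % q

/-- Enumerates `Fin q \ {bad}` by `t = 1, …, q - 1`. -/
def skipSymbol (q : ℕ) (hq : 0 < q) (bad t : ℕ) : Fin q :=
  ⟨(if t ≤ bad then t - 1 else t) % q, Nat.mod_lt _ hq⟩

lemma eq_negMod_of_add_mod_eq_zero {q s x : ℕ} (hx : x < q) (h : (s + x) % q = 0) :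
    x = negMod q s := by
  have hr : s % q < q := Nat.mod_lt s (by omega)
  obtain ⟨k, hk⟩ : q ∣ s % q + x := by
    rw [Nat.dvd_iff_mod_eq_zero, Nat.add_mod, Nat.mod_mod, ← Nat.add_mod, h]
  have hk2 : k < 2 := by nlinarith
  interval_cases k
  · simp [negMod, show x = 0 by omega, show s % q = 0 by omega]
  · rw [negMod, Nat.mod_eq_of_lt (by omega)]
    omega

lemma skipSymbol_val_ne {q : ℕ} (hq : 0 < q) {bad t : ℕ} (ht : 1 ≤ t)
    (htq : t < q) : (skipSymbol q hq bad t).val ≠ bad := by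
  change (if t ≤ bad then t - 1 else t) % q ≠ bad
  split_ifs <;> rw [Nat.mod_eq_of_lt (by omega)] <;> omega

lemma sum_take_reverse {M : Type*} [AddCommMonoid M] (l : List M) (k : ℕ) :
    (l.reverse.take k).sum = (l.drop (l.length - k)).sum := by
  rw [List.take_reverse, List.sum_reverse]

section blockList

variable {q a : ℕ} (hq : 0 < q) (u : List (Fin q)) (c : ℕ → ℕ)

lemma blockList_succ (m : ℕ) :
    blockList q a hq u c (m + 1) = blockList q a hq u c m ++
      [skipSymbol q hq (negMod q (((blockList q a hq u c m).reverse.take (a - 1)).map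
        Fin.val).sum) (c m)] := rfl

lemma length_blockList (m : ℕ) : (blockList q a hq u c m).length = u.length + m := by
  induction m with
  | zero => rfl
  | succ m ih => simp [blockList_succ, ih, Nat.add_assoc]

lemma take_length_blockList (m : ℕ) : (blockList q a hq u c m).take u.length = u := by
  induction m with
  | zero => exact List.take_length
  | succ m ih =>
    rw [blockList_succ, List.take_append_of_le_length (by rw [length_blockList]; omega), ih]

lemma blockList_lastWindow_sum_mod_ne_zero (hu : u.length = a) (ha : 1 ≤ a) {m : ℕ}
    (hc : 1 ≤ c m) (hcq : c m < q) :
    ((((blockList q a hq u c (m + 1)).drop (m + 1)).take a).map Fin.val).sum % q ≠ 0 := by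
  rw [blockList_succ]
  set z := blockList q a hq u c m
  have hz : z.length = a + m := by rw [length_blockList, hu]
  have hsuffix : ((z.drop (m + 1)).map Fin.val).sum =
      ((z.reverse.take (a - 1)).map Fin.val).sum := by
    rw [List.map_take, List.map_reverse, sum_take_reverse, List.length_map, List.map_drop, hz]
    congr 2; omega
  rw [List.drop_append_of_le_length (by omega),
    List.take_of_length_le (by simp [hz]; omega), List.map_append, List.sum_append, hsuffix]
  intro h
  exact skipSymbol_val_ne hq hc hcq <|
    eq_negMod_of_add_mod_eq_zero (Fin.isLt _) (by simpa using h)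

lemma blockList_window_sum_mod_ne_zero (hu : u.length = a) (ha : 1 ≤ a) (m : ℕ)
    (hc : ∀ k < m, 1 ≤ c k ∧ c k < q) {j : ℕ} (hj : 1 ≤ j) (hjm : j ≤ m) :
    ((((blockList q a hq u c m).drop j).take a).map Fin.val).sum % q ≠ 0 := by
  induction m with
  | zero => omega
  | succ m ih =>
    rcases (show j ≤ m ∨ j = m + 1 by omega) with hjm | rfl
    · rw [blockList_succ, List.drop_append_of_le_length (by rw [length_blockList]; omega),
        List.take_append_of_le_length (by simp [length_blockList, hu]; omega)]
      exact ih (fun k hk => hc k (by omega)) hjm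
    · exact blockList_lastWindow_sum_mod_ne_zero hq u c hu ha (hc m (by omega)).1
        (hc m (by omega)).2

end blockList

section flatten

variable {α : Type*} {ℓ : ℕ}

lemma drop_mul_flatten {L : List (List α)} (hL : ∀ b ∈ L, b.length = ℓ) (i : ℕ) :
    L.flatten.drop (i * ℓ) = (L.drop i).flatten := by
  induction L generalizing i with
  | nil => simp
  | cons b L ih =>
    cases i with
    | zero => simp
    | succ i =>
      have ih := ih (fun b' hb' => hL b' (List.mem_cons_of_mem _ hb')) i
      obtain rfl := hL b List.mem_cons_self
      rw [List.flatten_cons, Nat.succ_mul, Nat.add_comm, List.drop_length_add_append, ih]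
      rfl

variable {M : ℕ} {f : Fin M → List α}

lemma length_flatten_ofFn (hf : ∀ i, (f i).length = ℓ) :
    (List.ofFn f).flatten.length = M * ℓ := by
  simp [List.length_flatten, List.sum_ofFn, hf]

lemma take_drop_flatten_ofFn (hf : ∀ i, (f i).length = ℓ) (i : Fin M) {j n : ℕ}
    (hjn : j + n ≤ ℓ) :
    ((List.ofFn f).flatten.drop (i * ℓ + j)).take n = ((f i).drop j).take n := by
  have hL : ∀ b ∈ List.ofFn f, b.length = ℓ := by
    rintro b hb
    obtain ⟨k, rfl⟩ := List.mem_ofFn.mp hb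
    exact hf k
  rw [← List.drop_drop, drop_mul_flatten hL,
    List.drop_eq_getElem_cons (l := List.ofFn f) (by simp : (i : ℕ) < _), List.flatten_cons,
    List.getElem_ofFn,
    List.drop_append_of_le_length (by rw [hf]; omega),
    List.take_append_of_le_length (by rw [List.length_drop, hf]; omega)]

end flatten

/-- Every output of `encode₂` is `(A*,ℓ)`-addressable: it has length `Mℓ`, each
block starts with its address, and every window of `a` consecutive symbols of a
block starting at a position `≥ 2` (1-indexed) has symbol sum nonzero mod `q`,
hence lies outside `A* = {u : Σ u_i ≡ 0 mod q}`. -/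
theorem stmt_11 (q a ℓ M : ℕ) (hq : 2 ≤ q) (ha : 2 ≤ a) (hℓ : 2 * a ≤ ℓ)
    (u : Fin M → List (Fin q))
    (hulen : ∀ i, (u i).length = a)
    (c : Fin M → ℕ → ℕ)
    (hc : ∀ i m, m < ℓ - a → 1 ≤ c i m ∧ c i m ≤ q - 1) :
    (encode2 q a ℓ M (by omega) u c).length = M * ℓ ∧
    (∀ i : Fin M,
      (((encode2 q a ℓ M (by omega) u c).drop (i.val * ℓ)).take a) = u i) ∧
    (∀ i : Fin M, ∀ j : ℕ, 1 ≤ j → j + a ≤ ℓ →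
      ((((((encode2 q a ℓ M (by omega) u c).drop (i.val * ℓ + j)).take a)).map
        Fin.val).sum) % q ≠ 0) := by
  have hq0 : 0 < q := by omega
  set f : Fin M → List (Fin q) := fun i => blockList q a hq0 (u i) (c i) (ℓ - a)
  have hf : ∀ i, (f i).length = ℓ := fun i => by
    simp only [f, length_blockList, hulen]; omega
  have henc : encode2 q a ℓ M (by omega) u c = (List.ofFn f).flatten := rfl
  refine ⟨henc ▸ length_flatten_ofFn hf, fun i => ?_, fun i j hj hja => ?_⟩
  · have := take_drop_flatten_ofFn hf i (j := 0) (n := a) (by omega)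
    rw [Nat.add_zero, List.drop_zero] at this
    rw [henc, this, ← hulen i]
    exact take_length_blockList hq0 (u i) (c i) (ℓ - a)
  · rw [henc, take_drop_flatten_ofFn hf i hja]
    exact blockList_window_sum_mod_ne_zero hq0 (u i) (c i) (hulen i) (by omega) (ℓ - a)
      (fun k hk => ⟨(hc i k hk).1, Nat.lt_of_le_pred hq0 (hc i k hk).2⟩) hj (by omega)
end
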